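/- arXiv:1201.6049 — 3 statements merged into one kernel-verified Lean document; each statement's English description precedes it below -/
import Mathlib

section
/- For any finite simple graph G, the sum over all vertices of the curvature K(v) = ∑_{k≥0} (-1)^k V_{k-1}(v)/(k+1) equals the Euler characteristic χ(G) = ∑_{k≥0} (-1)^k v_k (Gauss-Bonnet for graphs). -/
open Finset

attribute [local instance] Classical.propDecidable

variable {V : Type*}

/-- Number of complete subgraphs `K_k` of `G` whose vertex set lies inside `A`. -/
noncomputable def cliquesIn [Fintype V] (G : SimpleGraph V) (k : ℕ) (A : Finset V) : ℕ :=
  ((G.cliqueFinset k).filter (fun s => s ⊆ A)).card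

/-- Euler characteristic of the subgraph of `G` induced on `A`. -/
noncomputable def eulerCharOn [Fintype V] (G : SimpleGraph V) (A : Finset V) : ℤ :=
  ∑ k ∈ Finset.range (Fintype.card V + 1), (-1 : ℤ) ^ k * (cliquesIn G (k + 1) A : ℤ)

/-- Euler characteristic of `G`. -/
noncomputable def eulerChar [Fintype V] (G : SimpleGraph V) : ℤ :=
  eulerCharOn G Finset.univ

/-- Curvature of `G` at `v`. -/
noncomputable def curvature [Fintype V] (G : SimpleGraph V) (v : V) : ℚ :=
  ∑ k ∈ Finset.range (Fintype.card V + 1),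
    (-1 : ℚ) ^ k * (cliquesIn G k (G.neighborFinset v) : ℚ) / (k + 1)

/-- Exit set: neighbors of `v` with smaller `f`-value. -/
noncomputable def exitSet [Fintype V] (G : SimpleGraph V) (f : V → ℝ) (v : V) : Finset V :=
  (G.neighborFinset v).filter (fun w => f w < f v)

/-- Entrance set: neighbors of `v` with larger `f`-value. -/
noncomputable def enterSet [Fintype V] (G : SimpleGraph V) (f : V → ℝ) (v : V) : Finset V :=
  (G.neighborFinset v).filter (fun w => f v < f w)

/-- Poincaré–Hopf index of `f` at `v`. -/
noncomputable def indexOf [Fintype V] (G : SimpleGraph V) (f : V → ℝ) (v : V) : ℤ :=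
  1 - eulerCharOn G (exitSet G f v)

/-!
Gauss–Bonnet is a double count. A `k`-clique `s` in the neighbourhood of `v` is the same as the
`(k+1)`-clique `insert v s` together with its marked vertex `v`, so summing the `k`-clique counts
of all links counts every `(k+1)`-clique `k + 1` times. Dividing by `k + 1` and taking the
alternating sum over `k` turns `∑ v, K(v)` term by term into `χ(G)`.
-/

namespace SimpleGraph

variable [Fintype V] (G : SimpleGraph V)

lemma cliquesIn_neighborFinset (v : V) (k : ℕ) :
    cliquesIn G k (G.neighborFinset v) = #{t ∈ G.cliqueFinset (k + 1) | v ∈ t} := by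
  refine card_nbij' (insert v) (·.erase v) ?_ ?_ ?_ ?_
  · intro s hs
    simp only [coe_filter, mem_cliqueFinset_iff, Set.mem_ofPred_eq] at hs ⊢
    exact ⟨hs.1.insert fun w hw => (G.mem_neighborFinset v w).mp (hs.2 hw), mem_insert_self v s⟩
  · intro t ht
    simp only [coe_filter, mem_cliqueFinset_iff, Set.mem_ofPred_eq] at ht ⊢
    refine ⟨ht.1.erase_of_mem ht.2, fun w hw => ?_⟩
    rw [mem_erase] at hw
    exact (G.mem_neighborFinset v w).mpr (ht.1.isClique ht.2 hw.2 hw.1.symm)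
  · intro s hs
    simp only [coe_filter, Set.mem_ofPred_eq] at hs
    exact erase_insert fun hv => G.irrefl ((G.mem_neighborFinset v v).mp (hs.2 hv))
  · intro t ht
    simp only [coe_filter, Set.mem_ofPred_eq] at ht
    exact insert_erase ht.2

lemma sum_cliquesIn_neighborFinset (k : ℕ) :
    ∑ v, cliquesIn G k (G.neighborFinset v) = (k + 1) * cliquesIn G (k + 1) univ := by
  calc ∑ v, cliquesIn G k (G.neighborFinset v)
      = ∑ v, #{t ∈ G.cliqueFinset (k + 1) | v ∈ t} := by
        simp only [cliquesIn_neighborFinset]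
    _ = ∑ t ∈ G.cliqueFinset (k + 1), #{v | v ∈ t} :=
        sum_card_bipartiteAbove_eq_sum_card_bipartiteBelow (fun v t => v ∈ t)
    _ = ∑ t ∈ G.cliqueFinset (k + 1), (k + 1) :=
        sum_congr rfl fun t ht => by
          rw [filter_mem_eq_inter, univ_inter, (mem_cliqueFinset_iff.mp ht).card_eq]
    _ = (k + 1) * cliquesIn G (k + 1) univ := by
        simp [cliquesIn, mul_comm]

end SimpleGraph

/-- **Gauss–Bonnet for graphs.** For any finite simple graph, the sum of the curvatures
`K(v) = ∑_k (-1)^k V_{k-1}(v)/(k+1)` over all vertices equals the Euler characteristic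
`χ(G) = ∑_k (-1)^k v_k`. -/
theorem gauss_bonnet [Fintype V] (G : SimpleGraph V) :
    ∑ v : V, curvature G v = (eulerChar G : ℚ) := by
  have hcount (k : ℕ) : ∑ v, (cliquesIn G k (G.neighborFinset v) : ℚ) =
      (k + 1) * cliquesIn G (k + 1) univ := by
    exact_mod_cast G.sum_cliquesIn_neighborFinset k
  simp only [curvature, eulerChar, eulerCharOn]
  push_cast
  rw [sum_comm]
  refine sum_congr rfl fun k _ => ?_
  rw [← sum_div, ← mul_sum, hcount]
  field_simp
end

section
/- For any finite simple graph G and any injective function f: V → ℝ, and any k ≥ 0, the sum over all vertices v of the number W_k(v) of k-dimensional cliques in S(v) that contain both a vertex w with f(w) < f(v) and a vertex u with f(u) > f(v) equals k times the number of (k+1)-dimensional cliques of G. -/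
open Finset

attribute [local instance] Classical.propDecidable

variable {V : Type*}

/-! Removing `v` from a `(k+2)`-clique `t ∋ v` gives a `(k+1)`-clique in the neighbourhood of `v`,
and every such clique arises exactly once this way. Hence both sides count the pairs `(t, v)` with
`t` a `(k+2)`-clique and `v ∈ t` neither the `f`-minimum nor the `f`-maximum of `t`; as `f` is
injective, each `t` contributes exactly `k` such vertices. -/

section LinearOrder

variable {α β : Type*} [LinearOrder β] {f : α → β} {t : Finset α} {m x : α}

theorem exists_mem_lt_iff_ne_of_le (hf : Set.InjOn f t) (hm : m ∈ t) (hmin : ∀ y ∈ t, f m ≤ f y)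
    (hx : x ∈ t) : (∃ w ∈ t, f w < f x) ↔ x ≠ m := by
  constructor
  · rintro ⟨w, hw, hwx⟩ rfl
    exact (hmin w hw).not_gt hwx
  · intro hxm
    exact ⟨m, hm, (hmin x hx).lt_of_ne fun h => hxm (hf hx hm h.symm)⟩

theorem card_filter_exists_lt_and_exists_gt (hf : Set.InjOn f t) :
    #{v ∈ t | (∃ w ∈ t, f w < f v) ∧ ∃ u ∈ t, f v < f u} = #t - 2 := by
  rcases t.eq_empty_or_nonempty with rfl | ht
  · simp
  obtain ⟨m, hm, hmin⟩ := t.exists_min_image f ht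
  obtain ⟨M, hM, hmax⟩ := t.exists_max_image f ht
  have hfilter : {v ∈ t | (∃ w ∈ t, f w < f v) ∧ ∃ u ∈ t, f v < f u} = t \ {m, M} := by
    ext x
    by_cases hx : x ∈ t
    · have hgt : (∃ u ∈ t, f x < f u) ↔ x ≠ M :=
        exists_mem_lt_iff_ne_of_le (β := βᵒᵈ) hf hM hmax hx
      simp [hx, exists_mem_lt_iff_ne_of_le hf hm hmin hx, hgt]
    · simp [hx]
  rw [hfilter, card_sdiff_of_subset (insert_subset hm (singleton_subset_iff.2 hM))]
  by_cases hmM : m = M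
  · subst hmM
    have ht : t = {m} := eq_singleton_iff_unique_mem.2
      ⟨hm, fun x hx => hf hx hm ((hmax x hx).antisymm (hmin x hx))⟩
    simp [ht]
  · rw [card_pair hmM]

end LinearOrder

theorem Finset.exists_mem_erase_iff {α : Type*} [DecidableEq α] {p : α → Prop} {s : Finset α}
    {a : α} (ha : ¬p a) : (∃ x ∈ s.erase a, p x) ↔ ∃ x ∈ s, p x :=
  ⟨fun ⟨x, hx, h⟩ => ⟨x, mem_of_mem_erase hx, h⟩,
    fun ⟨x, hx, h⟩ => ⟨x, mem_erase.2 ⟨fun hxa => ha (hxa ▸ h), hx⟩, h⟩⟩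

theorem Finset.sum_card_filter_mem_and {α : Type*} [Fintype α] (C : Finset (Finset α))
    (r : α → Finset α → Prop) [∀ v t, Decidable (r v t)] :
    ∑ v, #{t ∈ C | v ∈ t ∧ r v t} = ∑ t ∈ C, #{v ∈ t | r v t} := by
  simp only [card_filter]
  rw [sum_comm]
  simp [ite_and, sum_ite_mem]

section Cliques

variable [Fintype V] (G : SimpleGraph V)

theorem cliquesIn_univ (n : ℕ) : cliquesIn G n univ = #(G.cliqueFinset n) := by
  simp [cliquesIn]

theorem card_cliqueFinset_filter_subset_neighborFinset (n : ℕ) (v : V) (p : Finset V → Prop)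
    [DecidablePred p] :
    #{s ∈ G.cliqueFinset n | s ⊆ G.neighborFinset v ∧ p s} =
      #{t ∈ G.cliqueFinset (n + 1) | v ∈ t ∧ p (t.erase v)} := by
  have hnotMem {s : Finset V} (hs : s ⊆ G.neighborFinset v) : v ∉ s := fun hv =>
    G.irrefl ((G.mem_neighborFinset v v).1 (hs hv))
  apply card_nbij' (insert v) (·.erase v)
  · intro s hs
    simp only [coe_filter, Set.mem_ofPred_eq, SimpleGraph.mem_cliqueFinset_iff] at hs ⊢
    obtain ⟨hclique, hsub, hp⟩ := hs
    refine ⟨hclique.insert fun b hb => (G.mem_neighborFinset v b).1 (hsub hb), mem_insert_self _ _,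
      ?_⟩
    rwa [erase_insert (hnotMem hsub)]
  · intro t ht
    simp only [coe_filter, Set.mem_ofPred_eq, SimpleGraph.mem_cliqueFinset_iff] at ht ⊢
    obtain ⟨hclique, hv, hp⟩ := ht
    refine ⟨hclique.erase_of_mem hv, fun w hw => ?_, hp⟩
    exact (G.mem_neighborFinset v w).2
      (hclique.isClique hv (mem_of_mem_erase hw) (ne_of_mem_erase hw).symm)
  · intro s hs
    simp only [coe_filter, Set.mem_ofPred_eq] at hs
    exact erase_insert (hnotMem hs.2.1)
  · intro t ht
    simp only [coe_filter, Set.mem_ofPred_eq] at ht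
    exact insert_erase ht.2.1

theorem sum_card_cliqueFinset_filter_subset_neighborFinset (n : ℕ) (p : V → Finset V → Prop)
    [∀ v s, Decidable (p v s)] :
    ∑ v, #{s ∈ G.cliqueFinset n | s ⊆ G.neighborFinset v ∧ p v s} =
      ∑ t ∈ G.cliqueFinset (n + 1), #{v ∈ t | p v (t.erase v)} := by
  simp_rw [card_cliqueFinset_filter_subset_neighborFinset G n _ (p _)]
  exact sum_card_filter_mem_and _ fun v t => p v (t.erase v)

end Cliques

/-- **Intermediate equations.** For any finite simple graph `G`, injective `f : V → ℝ` and
`k ≥ 0`, the sum over all vertices `v` of the number `W_k(v)` of `k`-dimensional cliques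
(`K_{k+1}` subgraphs) in `S(v)` containing both a vertex with smaller `f`-value and a vertex
with larger `f`-value than `f(v)` equals `k` times the number of `(k+1)`-dimensional cliques
(`K_{k+2}` subgraphs) of `G`. -/
theorem intermediate_equation [Fintype V] (G : SimpleGraph V) (f : V → ℝ)
    (hf : Function.Injective f) (k : ℕ) :
    ∑ v : V, ((G.cliqueFinset (k + 1)).filter (fun s =>
        s ⊆ G.neighborFinset v ∧ (∃ w ∈ s, f w < f v) ∧ (∃ u ∈ s, f v < f u))).card =
      k * cliquesIn G (k + 2) Finset.univ := by
  have hcard (t : Finset V) (ht : t ∈ G.cliqueFinset (k + 2)) :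
      #{v ∈ t | (∃ w ∈ t.erase v, f w < f v) ∧ ∃ u ∈ t.erase v, f v < f u} = k := by
    simp only [exists_mem_erase_iff, lt_irrefl, not_false_eq_true]
    rw [card_filter_exists_lt_and_exists_gt hf.injOn,
      (G.mem_cliqueFinset_iff.1 ht).card_eq, Nat.add_sub_cancel]
  rw [sum_card_cliqueFinset_filter_subset_neighborFinset G (k + 1)
      fun v s => (∃ w ∈ s, f w < f v) ∧ ∃ u ∈ s, f v < f u,
    sum_congr rfl hcard, sum_const, smul_eq_mul, cliquesIn_univ, mul_comm]
end

section
/- For any finite simple graph G and any injective function f: V → ℝ, the sum over all vertices of the index i_f(v) = 1 − χ(S_f^-(v)) equals the Euler characteristic χ(G) (Poincaré-Hopf for graphs). -/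
open Finset

attribute [local instance] Classical.propDecidable

variable {V : Type*}

section PH

variable [Fintype V]

lemma mem_exitSet (G : SimpleGraph V) (f : V → ℝ) (v w : V) :
    w ∈ exitSet G f v ↔ G.Adj v w ∧ f w < f v := by
  unfold exitSet
  simp [SimpleGraph.mem_neighborFinset]

lemma cliquesIn_univ_s3 (G : SimpleGraph V) (m : ℕ) :
    cliquesIn G m Finset.univ = (G.cliqueFinset m).card := by
  unfold cliquesIn
  rw [Finset.filter_true_of_mem (fun s _ => Finset.subset_univ s)]

lemma cliquesIn_one (G : SimpleGraph V) :
    cliquesIn G 1 Finset.univ = Fintype.card V := by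
  classical
  have himg : G.cliqueFinset 1 = Finset.univ.image (fun v => ({v} : Finset V)) := by
    ext s
    simp [SimpleGraph.mem_cliqueFinset_iff, SimpleGraph.isNClique_one, eq_comm]
  rw [cliquesIn_univ_s3, himg,
    Finset.card_image_of_injective _ (fun a b h => by simpa using h), Finset.card_univ]

lemma cliquesIn_top (G : SimpleGraph V) :
    cliquesIn G (Fintype.card V + 2) Finset.univ = 0 := by
  rw [cliquesIn_univ_s3, Finset.card_eq_zero, SimpleGraph.cliqueFinset_eq_empty_iff]
  exact SimpleGraph.cliqueFree_of_card_lt (by omega)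

lemma sum_cliquesIn_exitSet (G : SimpleGraph V) (f : V → ℝ)
    (hf : Function.Injective f) (m : ℕ) (hm : 1 ≤ m) :
    ∑ v : V, cliquesIn G m (exitSet G f v) = cliquesIn G (m + 1) Finset.univ := by
  classical
  rcases isEmpty_or_nonempty V with hV | hV
  · have hc0 : Fintype.card V = 0 := Fintype.card_eq_zero
    rw [Finset.univ_eq_empty, Finset.sum_empty]
    clear hV
    have h0 : G.cliqueFinset (m + 1) = ∅ :=
      (SimpleGraph.cliqueFree_of_card_lt (by omega)).cliqueFinset
    unfold cliquesIn
    rw [h0, Finset.filter_empty, Finset.card_empty]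
  · set maxVtx : Finset V → V := fun t =>
      if h : t.Nonempty then (t.exists_max_image f h).choose else Classical.arbitrary V with hmax
    have hmem : ∀ t : Finset V, t.Nonempty → maxVtx t ∈ t ∧ ∀ x ∈ t, f x ≤ f (maxVtx t) := by
      intro t h
      have := (t.exists_max_image f h).choose_spec
      simp only [hmax, dif_pos h]
      exact this
    rw [cliquesIn_univ_s3,
      Finset.card_eq_sum_card_fiberwise (f := maxVtx) (t := Finset.univ)
        (fun t _ => Finset.mem_univ _)]
    refine Finset.sum_congr rfl fun v _ => ?_
    unfold cliquesIn
    refine Finset.card_bij (fun s _ => insert v s) ?_ ?_ ?_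
    · intro s hs
      rw [Finset.mem_filter, SimpleGraph.mem_cliqueFinset_iff] at hs
      obtain ⟨hsc, hsub⟩ := hs
      have hvs : v ∉ s := fun h =>
        absurd ((mem_exitSet G f v v).mp (hsub h)).2 (lt_irrefl _)
      have hadj : ∀ b ∈ s, G.Adj v b := fun b hb =>
        ((mem_exitSet G f v b).mp (hsub hb)).1
      rw [Finset.mem_filter, SimpleGraph.mem_cliqueFinset_iff]
      refine ⟨hsc.insert hadj, ?_⟩
      obtain ⟨humem, humax⟩ := hmem (insert v s) (Finset.insert_nonempty v s)
      rcases Finset.mem_insert.mp humem with h | h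
      · exact h
      · have h1 : f (maxVtx (insert v s)) < f v :=
          ((mem_exitSet G f v _).mp (hsub h)).2
        have h2 : f v ≤ f (maxVtx (insert v s)) :=
          humax v (Finset.mem_insert_self v s)
        exact absurd h1 (not_lt.mpr h2)
    · intro s₁ h₁ s₂ h₂ h
      rw [Finset.mem_filter, SimpleGraph.mem_cliqueFinset_iff] at h₁ h₂
      have hv₁ : v ∉ s₁ := fun hh =>
        absurd ((mem_exitSet G f v v).mp (h₁.2 hh)).2 (lt_irrefl _)
      have hv₂ : v ∉ s₂ := fun hh =>
        absurd ((mem_exitSet G f v v).mp (h₂.2 hh)).2 (lt_irrefl _)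
      have := congrArg (fun u : Finset V => u.erase v) h
      simpa [Finset.erase_insert hv₁, Finset.erase_insert hv₂] using this
    · intro t ht
      rw [Finset.mem_filter, SimpleGraph.mem_cliqueFinset_iff] at ht
      obtain ⟨htc, hvt⟩ := ht
      have hne : t.Nonempty := by
        have hcard : t.card = m + 1 := htc.2
        exact Finset.card_pos.mp (by omega)
      obtain ⟨hvmem, hvmax⟩ := hmem t hne
      rw [hvt] at hvmem hvmax
      refine ⟨t.erase v, ?_, ?_⟩
      · rw [Finset.mem_filter, SimpleGraph.mem_cliqueFinset_iff]
        constructor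
        · refine ⟨htc.1.subset ?_, ?_⟩
          · exact_mod_cast Finset.erase_subset v t
          · simp [Finset.card_erase_of_mem hvmem, htc.2]
        · intro w hw
          have hwv : w ≠ v := Finset.ne_of_mem_erase hw
          have hwt : w ∈ t := Finset.mem_of_mem_erase hw
          exact (mem_exitSet G f v w).mpr
            ⟨(htc.1 hwt hvmem hwv).symm,
             lt_of_le_of_ne (hvmax w hwt) (fun h => hwv (hf h))⟩
      · exact Finset.insert_erase hvmem

theorem poincare_hopf_aux (G : SimpleGraph V) (f : V → ℝ)
    (hf : Function.Injective f) :
    ∑ v : V, indexOf G f v = eulerChar G := by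
  have key : ∑ v : V, eulerCharOn G (exitSet G f v)
      = ∑ k ∈ Finset.range (Fintype.card V + 1),
          (-1 : ℤ) ^ k * (cliquesIn G (k + 2) Finset.univ : ℤ) := by
    unfold eulerCharOn
    rw [Finset.sum_comm]
    refine Finset.sum_congr rfl fun k _ => ?_
    rw [← Finset.mul_sum, ← Nat.cast_sum,
      sum_cliquesIn_exitSet G f hf (k + 1) (by omega)]
  unfold indexOf
  rw [Finset.sum_sub_distrib, key, Finset.sum_const, Finset.card_univ, nsmul_eq_mul, mul_one]
  unfold eulerChar eulerCharOn
  rw [Finset.sum_range_succ' (fun k => (-1 : ℤ) ^ k * (cliquesIn G (k + 1) Finset.univ : ℤ))]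
  rw [Finset.sum_range_succ (fun k => (-1 : ℤ) ^ k * (cliquesIn G (k + 2) Finset.univ : ℤ))]
  rw [cliquesIn_top, cliquesIn_one]
  have hre : ∀ k ∈ Finset.range (Fintype.card V),
      (-1 : ℤ) ^ (k + 1) * (cliquesIn G (k + 1 + 1) Finset.univ : ℤ)
        = -((-1 : ℤ) ^ k * (cliquesIn G (k + 2) Finset.univ : ℤ)) := by
    intro k _
    ring_nf
  rw [Finset.sum_congr rfl hre, Finset.sum_neg_distrib]
  push_cast
  ring

end PH


/-- **Poincaré–Hopf for graphs.** For any finite simple graph `G` and injective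
`f : V → ℝ`, the sum over all vertices of the index `i_f(v) = 1 - χ(S_f^-(v))`
equals the Euler characteristic of `G`. -/
theorem poincare_hopf [Fintype V] (G : SimpleGraph V) (f : V → ℝ)
    (hf : Function.Injective f) :
    ∑ v : V, indexOf G f v = eulerChar G := by
  exact poincare_hopf_aux G f hf
end
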